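/- Let p be a prime and v ∈ W̃ ∪ {ε}. Then one has the identity of rational functions T̄_v = ∏_{w ∈ W̃} (T̄_w · T̄_{w_{LR}} / (T̄_{w_R} · T̄_{w_L}))^{|v|_w} = ∏_{w ∈ W̃} r_w^{|v|_w}, where the product is finite because |v|_w = 0 for all but finitely many w ∈ W̃. -/

import Mathlib

open Finset

/-- `theta p j n` is the number of `t ∈ {0,…,n}` with `ν_p (binom n t) = j`. -/
def theta (p j n : ℕ) : ℕ :=
  ((Finset.range (n + 1)).filter fun t => padicValNat p (n.choose t) = j).card

/-- the base-`p` digit of `n` at position `i`. -/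
def digit (p n i : ℕ) : ℕ := n / p ^ i % p

/-- Words over `{0,…,p−1}` are represented as lists, least significant (rightmost) letter
first; `wordCount p w n` is the number of occurrences of `w` as a factor of the base-`p`
expansion of `n` (padded with leading zeros). -/
noncomputable def wordCount (p : ℕ) (w : List ℕ) (n : ℕ) : ℕ :=
  Set.ncard {i : ℕ | ∀ k < w.length, digit p n (i + k) = w.getD k 0}

/-- membership in the set `W` of admissible words: length ≥ 2, letters `< p`,
leftmost letter (last entry of the list) nonzero, rightmost letter (head) ≠ p−1. -/
def Adm (p : ℕ) (w : List ℕ) : Prop :=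
  2 ≤ w.length ∧ (∀ a ∈ w, a < p) ∧ w.getD (w.length - 1) 0 ≠ 0 ∧ w.getD 0 0 ≠ p - 1

/-- membership in `W_j`. -/
def AdmJ (p j : ℕ) (w : List ℕ) : Prop := Adm p w ∧ w.length ≤ j + 1

/-- membership in `W̃`: nonempty words with letters `< p` and nonzero leftmost letter. -/
def Wt (p : ℕ) (w : List ℕ) : Prop :=
  w ≠ [] ∧ (∀ a ∈ w, a < p) ∧ w.getD (w.length - 1) 0 ≠ 0

/-- The polynomial `T_n(x) = Σ_{t=0}^n x^{ν_p(binom n t)}`. -/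
noncomputable def Tpoly (p n : ℕ) : Polynomial ℤ :=
  ∑ t ∈ Finset.range (n + 1), Polynomial.X ^ padicValNat p (n.choose t)

/-- right truncation: remove the rightmost letter. -/
def rightT (w : List ℕ) : List ℕ := w.tail

/-- left truncation: remove the leftmost letter together with the zeros following it. -/
def leftT (w : List ℕ) : List ℕ := ((w.dropLast).reverse.dropWhile (· = 0)).reverse

/-- the common value `w_{LR} = (w_L)_R = (w_R)_L`. -/
def lrT (w : List ℕ) : List ℕ := leftT w.tail

/-- `T̄_v = T_{(v)_p}/θ_p(0,(v)_p)` as a rational function over `ℚ`. -/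
noncomputable def TbarR (p : ℕ) (v : List ℕ) : RatFunc ℚ :=
  algebraMap (Polynomial ℚ) (RatFunc ℚ) ((Tpoly p (Nat.ofDigits p v)).map (Int.castRingHom ℚ)) /
    (theta p 0 (Nat.ofDigits p v) : RatFunc ℚ)

/-- the rational function `r_w`. -/
noncomputable def rFun (p : ℕ) (w : List ℕ) : RatFunc ℚ :=
  TbarR p w * TbarR p (lrT w) / (TbarR p (rightT w) * TbarR p (leftT w))

/-- `T̄_v` as a power series over `ℚ`. -/
noncomputable def TbarS (p : ℕ) (v : List ℕ) : PowerSeries ℚ :=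
  (((Tpoly p (Nat.ofDigits p v)).map (Int.castRingHom ℚ) : Polynomial ℚ) : PowerSeries ℚ) *
    (PowerSeries.C (theta p 0 (Nat.ofDigits p v) : ℚ))⁻¹

/-- the power series expansion of `r_w` at `0`. -/
noncomputable def rSer (p : ℕ) (w : List ℕ) : PowerSeries ℚ :=
  TbarS p w * TbarS p (lrT w) * (TbarS p (rightT w) * TbarS p (leftT w))⁻¹

/-- `T̄_v` as a polynomial over `ℚ`. -/
noncomputable def TbarP (p : ℕ) (v : List ℕ) : Polynomial ℚ :=
  ((theta p 0 (Nat.ofDigits p v) : ℚ))⁻¹ • ((Tpoly p (Nat.ofDigits p v)).map (Int.castRingHom ℚ))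

/-- formal logarithm of a power series with constant term 1. -/
noncomputable def logPS {K : Type*} [Field K] (f : PowerSeries K) : PowerSeries K :=
  PowerSeries.mk fun n => ∑ k ∈ Finset.range (n + 1),
    ((-1 : K) ^ (k + 1) / k) * PowerSeries.coeff n ((f - 1) ^ k)

/-- formal exponential of a power series with constant term 0. -/
noncomputable def expPS {K : Type*} [Field K] (f : PowerSeries K) : PowerSeries K :=
  PowerSeries.mk fun n => ∑ k ∈ Finset.range (n + 1),
    ((k.factorial : K))⁻¹ * PowerSeries.coeff n (f ^ k)

/-- integer powers of a power series over a field. -/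
noncomputable def fpow {K : Type*} [Field K] (f : PowerSeries K) (z : ℤ) : PowerSeries K :=
  if 0 ≤ z then f ^ z.toNat else f⁻¹ ^ (-z).toNat

/-- sum of base-`p` digits. -/
def digitSum (p n : ℕ) : ℕ := (Nat.digits p n).sum

/-!
The occurrences of words in `n` at positions `≥ 1` are exactly the occurrences in `⌊n/p⌋`, so
by induction on `n` it suffices that the factors `r_w` of the words `w ∈ W̃` occurring at
position `0` multiply to `T̄_n / T̄_{⌊n/p⌋}`. These words are `w = n_μ ⋯ n_0` with `n_μ ≠ 0`.
With `A_k = T̄(n mod p^k)` and `B_k = T̄(⌊n/p⌋ mod p^k)` such a word has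
`r_w = (A_{μ+1}/B_μ) / (A_μ/B_{μ-1})`, a quotient that equals `1` when `n_μ = 0`; so the
product telescopes over all `μ` to `T̄_n / T̄_{⌊n/p⌋}`.
-/

section Digits

variable {p : ℕ}

lemma digit_zero_left (i : ℕ) : digit p 0 i = 0 := by simp [digit]

lemma digit_div (n i : ℕ) : digit p (n / p) i = digit p n (i + 1) := by
  rw [digit, digit, Nat.div_div_eq_div_mul, ← pow_succ']

lemma digit_div_pow (n i k : ℕ) : digit p (n / p ^ i) k = digit p n (i + k) := by
  rw [digit, digit, Nat.div_div_eq_div_mul, ← pow_add]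

lemma digit_lt (hp : 0 < p) (n i : ℕ) : digit p n i < p := Nat.mod_lt _ hp

lemma pow_le_of_digit_ne_zero {n i : ℕ} (h : digit p n i ≠ 0) : p ^ i ≤ n := by
  by_contra! hlt
  simp [digit, Nat.div_eq_of_lt hlt] at h

lemma lt_of_digit_ne_zero (hp : 1 < p) {n i : ℕ} (h : digit p n i ≠ 0) : i < n :=
  (Nat.lt_pow_self hp).trans_le (pow_le_of_digit_ne_zero h)

lemma digit_mod_pow_of_lt {n m k : ℕ} (hk : k < m) : digit p (n % p ^ m) k = digit p n k := by
  have hsplit : p ^ m = p ^ k * p ^ (m - k) := by rw [← pow_add]; congr 1; omega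
  rw [digit, digit, hsplit, Nat.mod_mul_right_div_self,
    Nat.mod_mod_of_dvd _ (dvd_pow_self p (by omega))]

lemma mod_pow_succ_of_digit_eq_zero {n μ : ℕ} (h : digit p n μ = 0) :
    n % p ^ (μ + 1) = n % p ^ μ := by
  rw [Nat.mod_pow_succ, ← digit, h, mul_zero, add_zero]

lemma length_digits_mod_pow (hp : 1 < p) {n μ : ℕ} (h : digit p n μ ≠ 0) :
    (Nat.digits p (n % p ^ (μ + 1))).length = μ + 1 := by
  have hlow : μ < (Nat.digits p (n % p ^ (μ + 1))).length := by
    rw [Nat.lt_digits_length_iff hp]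
    exact pow_le_of_digit_ne_zero (by rwa [digit_mod_pow_of_lt μ.lt_succ_self])
  have hhigh : (Nat.digits p (n % p ^ (μ + 1))).length ≤ μ + 1 :=
    (Nat.digits_length_le_iff hp _).mpr (Nat.mod_lt _ (by positivity))
  omega

end Digits

section Words

variable {p : ℕ}

lemma ofDigits_leftT (hp : 0 < p) {w : List ℕ} (hw : ∀ a ∈ w, a < p) :
    Nat.ofDigits p (leftT w) = Nat.ofDigits p w % p ^ (w.length - 1) := by
  have hzeros : w.dropLast.rtakeWhile (· = 0) =
      List.replicate (w.dropLast.rtakeWhile (· = 0)).length 0 :=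
    List.eq_replicate_iff.mpr ⟨rfl, fun a ha => by simpa using List.mem_rtakeWhile_imp ha⟩
  have hsplit := w.dropLast.rdropWhile_append_rtakeWhile (p := (· = 0))
  rw [hzeros] at hsplit
  rw [Nat.ofDigits_mod_pow_eq_ofDigits_take _ hp _ hw, ← List.dropLast_eq_take, ← hsplit,
    Nat.ofDigits_append_replicate_zero]
  rfl

lemma wt_digits (hp : 1 < p) {m : ℕ} (hm : m ≠ 0) : Wt p (Nat.digits p m) := by
  have hne : Nat.digits p m ≠ [] := Nat.digits_ne_nil_iff_ne_zero.mpr hm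
  refine ⟨hne, fun a ha => Nat.digits_lt_base hp ha, ?_⟩
  rw [List.getD_eq_getElem _ _ (by simpa [Nat.pos_iff_ne_zero] using hne),
    ← List.getLast_eq_getElem]
  exact Nat.getLast_digit_ne_zero p hm

lemma digits_ofDigits_of_wt (hp : 1 < p) {w : List ℕ} (hw : Wt p w) :
    Nat.digits p (Nat.ofDigits p w) = w := by
  refine Nat.digits_ofDigits p hp w hw.2.1 fun h => ?_
  rw [List.getLast_eq_getElem, ← List.getD_eq_getElem _ 0]
  exact hw.2.2

lemma ofDigits_injective_wt (hp : 1 < p) :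
    Function.Injective fun w : {w : List ℕ // Wt p w} => Nat.ofDigits p w.1 := by
  intro w w' h
  apply Subtype.ext
  rw [← digits_ofDigits_of_wt hp w.2, ← digits_ofDigits_of_wt hp w'.2]
  exact congrArg _ h

lemma finite_setOf_ofDigits_le (hp : 1 < p) (n : ℕ) :
    {w : {w : List ℕ // Wt p w} | Nat.ofDigits p w.1 ≤ n}.Finite :=
  (Set.finite_Iic n).preimage (ofDigits_injective_wt hp).injOn

end Words

section Occurrences

variable {p : ℕ}

def OccursAt (p : ℕ) (w : List ℕ) (n i : ℕ) : Prop :=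
  ∀ k < w.length, digit p n (i + k) = w.getD k 0

lemma occursAt_succ_iff {w : List ℕ} {n i : ℕ} :
    OccursAt p w n (i + 1) ↔ OccursAt p w (n / p) i := by
  refine forall₂_congr fun k _ => ?_
  rw [digit_div, Nat.add_right_comm]

lemma occursAt_zero_div_pow {w : List ℕ} {n i : ℕ} (h : OccursAt p w n i) :
    OccursAt p w (n / p ^ i) 0 := by
  intro k hk
  rw [digit_div_pow, Nat.zero_add]
  exact h k hk

lemma forall_lt_of_occursAt (hp : 0 < p) {w : List ℕ} {n i : ℕ} (h : OccursAt p w n i) :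
    ∀ a ∈ w, a < p := by
  intro a ha
  obtain ⟨k, hk, rfl⟩ := List.getElem_of_mem ha
  rw [← List.getD_eq_getElem _ 0, ← h k hk]
  exact digit_lt hp n _

lemma ofDigits_eq_mod_of_occursAt_zero {w : List ℕ} {n : ℕ}
    (h : OccursAt p w n 0) : Nat.ofDigits p w = n % p ^ w.length := by
  induction w generalizing n with
  | nil => simp [Nat.mod_one]
  | cons a t ih =>
    have hhead : n % p = a := by simpa [digit] using h 0 (by simp)
    have htail : OccursAt p t (n / p) 0 := fun k hk => by
      simpa [digit_div, Nat.add_comm] using h (k + 1) (by simpa using hk)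
    rw [Nat.ofDigits_cons, ih htail, List.length_cons, pow_succ', Nat.mod_mul, hhead]

lemma ofDigits_le_of_occursAt {w : List ℕ} {n i : ℕ} (h : OccursAt p w n i) :
    Nat.ofDigits p w ≤ n := by
  rw [ofDigits_eq_mod_of_occursAt_zero (occursAt_zero_div_pow h)]
  exact (Nat.mod_le _ _).trans (Nat.div_le_self _ _)

lemma ofDigits_le_of_wordCount_ne_zero {w : List ℕ} {n : ℕ}
    (h : wordCount p w n ≠ 0) : Nat.ofDigits p w ≤ n :=
  ofDigits_le_of_occursAt (Set.nonempty_of_ncard_ne_zero h).some_mem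

lemma lt_of_occursAt (hp : 1 < p) {w : List ℕ} (hw : Wt p w) {n i : ℕ}
    (h : OccursAt p w n i) : i < n := by
  have hlen : w.length - 1 < w.length := by
    have := List.length_pos_iff.mpr hw.1
    omega
  have hdigit : digit p n (i + (w.length - 1)) ≠ 0 := by
    rw [h _ hlen]
    exact hw.2.2
  exact (Nat.le_add_right i _).trans_lt (lt_of_digit_ne_zero hp hdigit)

open Classical in
lemma wordCount_eq_sum (hp : 1 < p) {w : List ℕ} (hw : Wt p w) {n N : ℕ} (hN : n ≤ N) :
    wordCount p w n = ∑ i ∈ range N, if OccursAt p w n i then 1 else 0 := by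
  have hset : {i | OccursAt p w n i} = ↑((range N).filter (OccursAt p w n)) := by
    ext i
    simpa using fun h => (lt_of_occursAt hp hw h).trans_le hN
  change {i | OccursAt p w n i}.ncard = _
  rw [hset, Set.ncard_coe_finset, Finset.card_filter]

open Classical in
lemma wordCount_eq_wordCount_div_add (hp : 1 < p) {w : List ℕ} (hw : Wt p w) (n : ℕ) :
    wordCount p w n = wordCount p w (n / p) + if OccursAt p w n 0 then 1 else 0 := by
  rw [wordCount_eq_sum hp hw (Nat.le_succ n), Finset.sum_range_succ',
    wordCount_eq_sum hp hw (Nat.div_le_self n p)]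
  simp only [occursAt_succ_iff]

end Occurrences

section Ratios

variable {p : ℕ}

noncomputable def TbarN (p n : ℕ) : RatFunc ℚ :=
  algebraMap (Polynomial ℚ) (RatFunc ℚ) ((Tpoly p n).map (Int.castRingHom ℚ)) /
    (theta p 0 n : RatFunc ℚ)

lemma TbarR_eq_TbarN (p : ℕ) (v : List ℕ) : TbarR p v = TbarN p (Nat.ofDigits p v) := rfl

lemma theta_zero_pos (p n : ℕ) : 0 < theta p 0 n :=
  Finset.card_pos.mpr ⟨0, Finset.mem_filter.mpr
    ⟨by simp, by rw [Nat.choose_zero_right, padicValNat_one_right]⟩⟩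

lemma Tpoly_eval_one (p n : ℕ) : (Tpoly p n).eval 1 = n + 1 := by
  simp [Tpoly, Polynomial.eval_finsetSum]

lemma TbarN_ne_zero (p n : ℕ) : TbarN p n ≠ 0 := by
  refine div_ne_zero (RatFunc.algebraMap_ne_zero fun h => ?_)
    (Nat.cast_ne_zero.mpr (theta_zero_pos p n).ne')
  rw [Polynomial.map_eq_zero_iff (Int.castRingHom ℚ).injective_int] at h
  have := Tpoly_eval_one p n
  rw [h, Polynomial.eval_zero] at this
  omega

lemma TbarN_zero (p : ℕ) : TbarN p 0 = 1 := by
  have htheta : theta p 0 0 = 1 := by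
    rw [theta, Finset.range_one, Finset.filter_singleton, Nat.choose_self, padicValNat_one_right,
      if_pos rfl, Finset.card_singleton]
  simp [TbarN, Tpoly, htheta]

/-- `r_w` for the word `w = n_μ ⋯ n_0` formed by the lowest `μ + 1` base-`p` digits of `n`. -/
noncomputable def rSuffix (p n μ : ℕ) : RatFunc ℚ :=
  TbarN p (n % p ^ (μ + 1)) * TbarN p (n / p % p ^ (μ - 1)) /
    (TbarN p (n / p % p ^ μ) * TbarN p (n % p ^ μ))

lemma rSuffix_eq_one {n μ : ℕ} (hd : digit p n μ = 0) : rSuffix p n μ = 1 := by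
  have hdiv : n / p % p ^ μ = n / p % p ^ (μ - 1) := by
    cases μ with
    | zero => rfl
    | succ μ => exact mod_pow_succ_of_digit_eq_zero (by rwa [digit_div])
  rw [rSuffix, mod_pow_succ_of_digit_eq_zero hd, hdiv, mul_comm (TbarN p _)]
  exact div_self (mul_ne_zero (TbarN_ne_zero _ _) (TbarN_ne_zero _ _))

lemma prod_range_rSuffix (n m : ℕ) :
    ∏ μ ∈ range m, rSuffix p n μ = TbarN p (n % p ^ m) / TbarN p (n / p % p ^ (m - 1)) := by
  induction m with
  | zero => simp [Nat.mod_one, TbarN_zero]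
  | succ m ih =>
    rw [Finset.prod_range_succ, ih, rSuffix, Nat.add_sub_cancel]
    have := TbarN_ne_zero p (n % p ^ m)
    have := TbarN_ne_zero p (n / p % p ^ (m - 1))
    have := TbarN_ne_zero p (n / p % p ^ m)
    field_simp

lemma rFun_eq_rSuffix (hp : 0 < p) {w : List ℕ} {n μ : ℕ} (hlen : w.length = μ + 1)
    (h : OccursAt p w n 0) : rFun p w = rSuffix p n μ := by
  have hw := forall_lt_of_occursAt hp h
  have hval : Nat.ofDigits p w = n % p ^ (μ + 1) := by
    rw [ofDigits_eq_mod_of_occursAt_zero h, hlen]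
  have htail : Nat.ofDigits p w.tail = n / p % p ^ μ := by
    rw [← Nat.ofDigits_div_eq_ofDigits_tail hp _ hw, hval, pow_succ',
      Nat.mod_mul_right_div_self]
  have hleft : Nat.ofDigits p (leftT w) = n % p ^ μ := by
    rw [ofDigits_leftT hp hw, hval, hlen, Nat.add_sub_cancel,
      Nat.mod_mod_of_dvd _ (pow_dvd_pow p μ.le_succ)]
  have hlr : Nat.ofDigits p (lrT w) = n / p % p ^ (μ - 1) := by
    rw [lrT, ofDigits_leftT hp fun a ha => hw a (List.mem_of_mem_tail ha), htail,
      List.length_tail, hlen, Nat.add_sub_cancel,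
      Nat.mod_mod_of_dvd _ (pow_dvd_pow p (μ.sub_le 1))]
  rw [rFun, TbarR_eq_TbarN, TbarR_eq_TbarN, TbarR_eq_TbarN, TbarR_eq_TbarN, hval, hlr,
    rightT, htail, hleft, rSuffix]

end Ratios

section Product

variable {p : ℕ}

noncomputable def wordProduct (p n : ℕ) : RatFunc ℚ :=
  ∏ᶠ w : {w : List ℕ // Wt p w}, rFun p w.1 ^ wordCount p w.1 n

lemma hasFiniteMulSupport_rFun_pow (hp : 1 < p) {n : ℕ} {g : {w : List ℕ // Wt p w} → ℕ}
    (hg : ∀ w, g w ≠ 0 → Nat.ofDigits p w.1 ≤ n) :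
    Function.HasFiniteMulSupport fun w => rFun p w.1 ^ g w :=
  (finite_setOf_ofDigits_le hp n).subset fun w hw => hg w fun h0 => hw (by simp [h0])

lemma bijOn_occursAt_zero (hp : 1 < p) (n : ℕ) :
    Set.BijOn (fun w : {w : List ℕ // Wt p w} => w.1.length - 1)
      {w | OccursAt p w.1 n 0} {μ | digit p n μ ≠ 0} := by
  have hpos : ∀ w : {w : List ℕ // Wt p w}, 0 < w.1.length :=
    fun w => List.length_pos_iff.mpr w.2.1
  refine ⟨fun w hw => ?_, fun w hw w' hw' hμ => ?_, fun μ hμ => ?_⟩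
  · have := hw _ (Nat.sub_lt (hpos w) one_pos)
    rw [Nat.zero_add] at this
    simpa [this] using w.2.2.2
  · have hlen : w.1.length = w'.1.length := by
      have := hpos w
      have := hpos w'
      dsimp only at hμ
      omega
    apply ofDigits_injective_wt hp
    simp only [ofDigits_eq_mod_of_occursAt_zero hw, ofDigits_eq_mod_of_occursAt_zero hw', hlen]
  · have hm : n % p ^ (μ + 1) ≠ 0 := fun h0 => hμ <| by
      rw [← digit_mod_pow_of_lt μ.lt_succ_self, h0, digit_zero_left]
    have hlen := length_digits_mod_pow hp hμ
    refine ⟨⟨_, wt_digits hp hm⟩, fun k hk => ?_, by simp [hlen]⟩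
    rw [Nat.getD_digits _ _ hp, ← digit, Nat.zero_add, digit_mod_pow_of_lt (hlen ▸ hk)]

lemma finprod_rFun_occursAt_zero (hp : 1 < p) (n : ℕ) :
    ∏ᶠ (w : {w : List ℕ // Wt p w}) (_ : w ∈ {w | OccursAt p w.1 n 0}), rFun p w.1 =
      TbarN p n / TbarN p (n / p) := by
  have hn : n < p ^ (n + 1) := (Nat.lt_pow_self hp).trans (Nat.pow_lt_pow_succ hp)
  calc _ = ∏ᶠ μ ∈ {μ | digit p n μ ≠ 0}, rSuffix p n μ := by
        refine finprod_mem_eq_of_bijOn _ (bijOn_occursAt_zero hp n) fun w hw => ?_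
        have := List.length_pos_iff.mpr w.2.1
        exact rFun_eq_rSuffix (Nat.zero_lt_of_lt hp) (by omega) hw
    _ = ∏ᶠ μ ∈ (range (n + 1) : Set ℕ), rSuffix p n μ := by
        refine finprod_mem_inter_mulSupport_eq' _ _ _ fun μ hμ => ?_
        have hd : digit p n μ ≠ 0 := fun hd => hμ (rSuffix_eq_one hd)
        simpa [hd] using Nat.lt_succ_of_lt (lt_of_digit_ne_zero hp hd)
    _ = _ := by
        rw [finprod_mem_coe_finset, prod_range_rSuffix, Nat.mod_eq_of_lt hn, Nat.add_sub_cancel,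
          Nat.mod_eq_of_lt ((Nat.div_le_self n p).trans_lt (Nat.lt_pow_self hp))]

open Classical in
lemma wordProduct_eq_mul (hp : 1 < p) (n : ℕ) :
    wordProduct p n = wordProduct p (n / p) * (TbarN p n / TbarN p (n / p)) := by
  have hind : ∀ w : {w : List ℕ // Wt p w},
      rFun p w.1 ^ (if OccursAt p w.1 n 0 then 1 else 0) =
        Set.mulIndicator {w | OccursAt p w.1 n 0} (fun w => rFun p w.1) w := by
    intro w
    split_ifs with h <;> simp [h]
  have hfin_div := hasFiniteMulSupport_rFun_pow hp (g := fun w => wordCount p w.1 (n / p))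
    fun w h => (ofDigits_le_of_wordCount_ne_zero h).trans (Nat.div_le_self n p)
  have hfin_zero := hasFiniteMulSupport_rFun_pow hp
    (g := fun w => if OccursAt p w.1 n 0 then 1 else 0) fun w h =>
      ofDigits_le_of_occursAt (n := n) (i := 0) (by_contra fun h' => h (if_neg h'))
  rw [← finprod_rFun_occursAt_zero hp n, finprod_mem_def, ← finprod_congr hind, wordProduct,
    wordProduct, ← finprod_mul_distrib hfin_div hfin_zero]
  exact finprod_congr fun w => by rw [wordCount_eq_wordCount_div_add hp w.2, pow_add]

lemma wordProduct_zero (hp : 1 < p) : wordProduct p 0 = 1 := by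
  have hcount : ∀ w : {w : List ℕ // Wt p w}, wordCount p w.1 0 = 0 := fun w => by
    rw [wordCount_eq_sum hp w.2 le_rfl, Finset.sum_range_zero]
  simp [wordProduct, hcount]

lemma wordProduct_eq_TbarN (hp : 1 < p) (n : ℕ) : wordProduct p n = TbarN p n := by
  induction n using Nat.strong_induction_on with
  | _ n ih =>
    rcases n.eq_zero_or_pos with rfl | hn
    · rw [wordProduct_zero hp, TbarN_zero]
    · rw [wordProduct_eq_mul hp, ih _ (Nat.div_lt_self hn hp),
        mul_div_cancel₀ _ (TbarN_ne_zero _ _)]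

end Product

theorem stmt5_general (p : ℕ) (hp : p.Prime) (v : List ℕ) :
    TbarR p v =
      ∏ᶠ w : {w : List ℕ // Wt p w}, rFun p w.1 ^ wordCount p w.1 (Nat.ofDigits p v) :=
  (wordProduct_eq_TbarN hp.one_lt _).symm

/-- the telescoping product `T̄_v = ∏_{w ∈ W̃} r_w^{|v|_w}`
(identity of rational functions; the product has finite support). -/
theorem stmt5 (p : ℕ) (hp : p.Prime) (v : List ℕ) (hv : v = [] ∨ Wt p v) :
    TbarR p v =
      ∏ᶠ w : {w : List ℕ // Wt p w}, rFun p w.1 ^ wordCount p w.1 (Nat.ofDigits p v) :=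
  stmt5_general p hp v
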